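/- The degree of the Grassmannian G(d,n) under the Plücker embedding, given by deg G(d,n) = (d(n−d))! · ∏_{i=0}^{d−1} i!/(n−d+i)!, is a positive integer for all 0 < d < n. -/

import Mathlib

/-! By Legendre's formula it suffices to show, for every prime power `q` and `m = n - d`, that
`∑_{i<d} ⌊(m+i)/q⌋ ≤ ⌊dm/q⌋ + ∑_{i<d} ⌊i/q⌋`. Reducing `m` and then `d` modulo `q` brings this
down to `max (s + r - q) 0 ≤ ⌊sr/q⌋` for `s, r ≤ q`, which is `(q - s)(q - r) ≥ 0`. -/

open Nat Finset

section FloorSums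

variable {q : ℕ}

theorem add_div_eq_mod_add_div (hq : 0 < q) (m i : ℕ) :
    (m + i) / q = (m % q + i) / q + m / q := by
  rw [← Nat.add_mul_div_left _ _ hq]
  congr 1
  have := Nat.mod_add_div m q
  omega

theorem mul_div_eq_mul_mod_div (hq : 0 < q) (d m : ℕ) :
    d * m / q = d * (m % q) / q + d * (m / q) := by
  rw [← Nat.add_mul_div_left _ _ hq]
  congr 1
  conv_lhs => rw [← Nat.mod_add_div m q]
  ring

theorem sum_range_add_div_eq_add_sub {s : ℕ} (hs : s < q) :
    ∀ {r : ℕ}, r ≤ q → ∑ i ∈ range r, (s + i) / q = s + r - q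
  | 0, _ => by simp; omega
  | r + 1, hr => by
    rw [sum_range_succ, sum_range_add_div_eq_add_sub hs (by omega)]
    rcases lt_or_ge (s + r) q with h | h
    · rw [Nat.div_eq_of_lt h]; omega
    · rw [Nat.div_eq_sub_div (by omega) h, Nat.div_eq_of_lt (by omega)]; omega

theorem add_sub_le_mul_div (hq : 0 < q) {s r : ℕ} (hs : s ≤ q) (hr : r ≤ q) :
    s + r - q ≤ s * r / q := by
  rw [Nat.le_div_iff_mul_le hq]
  rcases le_total (s + r) q with h | h
  · simp [Nat.sub_eq_zero_of_le h]
  · zify [h]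
    nlinarith [mul_nonneg (sub_nonneg.2 (Int.ofNat_le.2 hs)) (sub_nonneg.2 (Int.ofNat_le.2 hr))]

theorem sum_range_add_div_le_mul_div (hq : 0 < q) (d : ℕ) {r : ℕ} (hr : r ≤ q) :
    ∑ i ∈ range r, (d + i) / q ≤ d * r / q := by
  simp only [add_div_eq_mod_add_div hq d, sum_add_distrib, sum_const, card_range, smul_eq_mul,
    sum_range_add_div_eq_add_sub (mod_lt d hq) hr]
  rw [mul_comm d r, mul_div_eq_mul_mod_div hq, mul_comm r (d % q)]
  have := add_sub_le_mul_div hq (mod_lt d hq).le hr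
  omega

theorem sum_range_add_div_le (d m : ℕ) :
    ∑ i ∈ range d, (m + i) / q ≤ d * m / q + ∑ i ∈ range d, i / q := by
  rcases q.eq_zero_or_pos with rfl | hq
  · simp
  have hlow : ∑ i ∈ range (m % q), i / q = 0 :=
    sum_eq_zero fun i hi => Nat.div_eq_of_lt ((mem_range.mp hi).trans (mod_lt m hq))
  have hsplit : ∑ i ∈ range d, (m % q + i) / q =
      ∑ i ∈ range d, i / q + ∑ i ∈ range (m % q), (d + i) / q := by
    rw [← sum_range_add, add_comm d, sum_range_add, hlow, zero_add]
  simp only [add_div_eq_mod_add_div hq m, sum_add_distrib, sum_const, card_range, smul_eq_mul,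
    hsplit, mul_div_eq_mul_mod_div hq d m]
  have := sum_range_add_div_le_mul_div hq d (mod_lt m hq).le
  omega

end FloorSums

theorem prod_factorial_add_dvd (d m : ℕ) :
    ∏ i ∈ range d, (m + i)! ∣ (d * m)! * ∏ i ∈ range d, i ! := by
  rw [← factorization_le_iff_dvd (by positivity) (by positivity)]
  intro p
  by_cases hp : p.Prime
  swap
  · simp [factorization_eq_zero_of_not_prime _ hp]
  set N := d * m + m + d
  have legendre : ∀ x ≤ N, (x)!.factorization p = ∑ k ∈ Ico 1 (log p N + 1), x / p ^ k :=
    fun x hx => factorization_factorial hp (Nat.lt_succ_of_le (log_mono_right hx))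
  rw [Nat.factorization_mul (by positivity) (by positivity),
    factorization_prod fun i _ => factorial_ne_zero _,
    factorization_prod fun i _ => factorial_ne_zero _]
  simp only [Finsupp.add_apply, Finsupp.finsetSum_apply]
  rw [sum_congr rfl fun i hi => legendre (m + i) (by have := mem_range.1 hi; omega),
    sum_congr rfl fun i hi => legendre i (by have := mem_range.1 hi; omega),
    legendre (d * m) (by omega), sum_comm, sum_comm (s := range d), ← sum_add_distrib]
  exact sum_le_sum fun k _ => sum_range_add_div_le d m

theorem stmt_2_general (d n : ℕ) :
    ∃ k : ℕ, 0 < k ∧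
      (((d * (n - d)).factorial : ℚ) *
        ∏ i ∈ Finset.range d, (i.factorial : ℚ) / ((n - d + i).factorial : ℚ)) = (k : ℚ) := by
  obtain ⟨k, hk⟩ := prod_factorial_add_dvd d (n - d)
  have hk_pos : 0 < k := Nat.pos_of_ne_zero <| by
    rintro rfl
    simp [factorial_ne_zero, prod_eq_zero_iff] at hk
  refine ⟨k, hk_pos, ?_⟩
  rw [prod_div_distrib, ← mul_div_assoc, div_eq_iff (by positivity)]
  exact_mod_cast hk.trans (mul_comm _ _)

theorem stmt_2 (d n : ℕ) (hd : 0 < d) (hn : d < n) :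
    ∃ k : ℕ, 0 < k ∧
      (((d * (n - d)).factorial : ℚ) *
        ∏ i ∈ Finset.range d, (i.factorial : ℚ) / ((n - d + i).factorial : ℚ)) = (k : ℚ) :=
  stmt_2_general d n
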